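/- In a projective rectangle, if three lines intersect pairwise in three distinct points, then they are a coplanar triple; equivalently, three pairwise intersecting lines that are not coplanar as a triple all pass through one common point. -/

import Mathlib

/-- A projective rectangle: an incidence structure satisfying axioms (A1)-(A6). -/
structure ProjRect (Point Line : Type) where
  Incid : Point → Line → Prop
  /-- (A4) the special point. -/
  D : Point
  /-- (A1) every two distinct points lie on exactly one line. -/
  A1 : ∀ p q : Point, p ≠ q → ∃! l : Line, Incid p l ∧ Incid q l
  /-- (A2) there exist four points with no three collinear. -/
  A2 : ∃ a b c d : Point, a ≠ b ∧ a ≠ c ∧ a ≠ d ∧ b ≠ c ∧ b ≠ d ∧ c ≠ d ∧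
    (∀ l : Line, ¬(Incid a l ∧ Incid b l ∧ Incid c l)) ∧
    (∀ l : Line, ¬(Incid a l ∧ Incid b l ∧ Incid d l)) ∧
    (∀ l : Line, ¬(Incid a l ∧ Incid c l ∧ Incid d l)) ∧
    (∀ l : Line, ¬(Incid b l ∧ Incid c l ∧ Incid d l))
  /-- (A3) every line has at least three points. -/
  A3 : ∀ l : Line, ∃ p q r : Point, p ≠ q ∧ p ≠ r ∧ q ≠ r ∧
    Incid p l ∧ Incid q l ∧ Incid r l
  /-- (A5) each special line intersects every other line in exactly one point. -/
  A5 : ∀ s l : Line, Incid D s → l ≠ s → ∃! p : Point, Incid p s ∧ Incid p l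
  /-- (A6) restricted Pasch axiom. -/
  A6 : ∀ l1 l2 l3 l4 : Line, ∀ p p13 p14 p23 p24 : Point,
    ¬Incid D l1 → ¬Incid D l2 → l1 ≠ l2 → Incid p l1 → Incid p l2 → l3 ≠ l4 →
    Incid p13 l1 → Incid p13 l3 → Incid p14 l1 → Incid p14 l4 →
    Incid p23 l2 → Incid p23 l3 → Incid p24 l2 → Incid p24 l4 →
    p13 ≠ p14 → p13 ≠ p23 → p13 ≠ p24 → p14 ≠ p23 → p14 ≠ p24 → p23 ≠ p24 →
    ∃ q : Point, Incid q l3 ∧ Incid q l4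

/-- A subplane of a projective rectangle: sets of points and lines which, with the
induced incidence, form a projective plane. -/
def ProjRect.IsSubplane {Point Line : Type} (R : ProjRect Point Line)
    (P' : Set Point) (L' : Set Line) : Prop :=
  (∀ p q, p ∈ P' → q ∈ P' → p ≠ q → ∃! l, l ∈ L' ∧ R.Incid p l ∧ R.Incid q l) ∧
  (∀ l m, l ∈ L' → m ∈ L' → l ≠ m → ∃ x, x ∈ P' ∧ R.Incid x l ∧ R.Incid x m) ∧
  (∃ a b c d, a ∈ P' ∧ b ∈ P' ∧ c ∈ P' ∧ d ∈ P' ∧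
    a ≠ b ∧ a ≠ c ∧ a ≠ d ∧ b ≠ c ∧ b ≠ d ∧ c ≠ d ∧
    (∀ l ∈ L', ¬(R.Incid a l ∧ R.Incid b l ∧ R.Incid c l)) ∧
    (∀ l ∈ L', ¬(R.Incid a l ∧ R.Incid b l ∧ R.Incid d l)) ∧
    (∀ l ∈ L', ¬(R.Incid a l ∧ R.Incid c l ∧ R.Incid d l)) ∧
    (∀ l ∈ L', ¬(R.Incid b l ∧ R.Incid c l ∧ R.Incid d l)))

/-- A subplane is full if it contains every point of each ordinary line it contains. -/
def ProjRect.IsFull {Point Line : Type} (R : ProjRect Point Line)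
    (P' : Set Point) (L' : Set Line) : Prop :=
  ∀ l ∈ L', ¬R.Incid R.D l → ∀ p, R.Incid p l → p ∈ P'

/-!
Two distinct ordinary lines `a`, `b` through a point `C` span a full subplane. Its points are `D`,
the points of `a` and `b`, and the points of the *transversals*: ordinary lines meeting `a` and
`b` away from `C`. Its lines are `a`, `b`, the special lines, the transversals and the *spokes*,
ordinary lines through `C` that meet a transversal off `a ∪ b`. Closure under joins and meets and
fullness of the spokes all come from repeated use of the restricted Pasch axiom (A6) on a pair of
ordinary lines known to meet.

In a triangle with two ordinary sides, the third side crosses them away from their common vertex,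
so the plane they span contains it. Not all three sides are special, since special lines all meet
in `D`. If two sides `s`, `s'` are special and `c` is ordinary, join a point `P ≠ D` of `s` to a
point `V` of `c` off `s`: the resulting line `c'` is ordinary, `s` crosses the pair `c`, `c'` away
from `V`, and `s'`, like every special line, lies in the plane of `c` and `c'`.
-/

namespace ProjRect

variable {Point Line : Type} (R : ProjRect Point Line)

theorem line_eq_of_incid {p q : Point} {l m : Line} (hpq : p ≠ q) (hpl : R.Incid p l)
    (hql : R.Incid q l) (hpm : R.Incid p m) (hqm : R.Incid q m) : l = m :=
  (R.A1 p q hpq).unique ⟨hpl, hql⟩ ⟨hpm, hqm⟩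

theorem point_eq_of_incid {x y : Point} {l m : Line} (hlm : l ≠ m) (hxl : R.Incid x l)
    (hxm : R.Incid x m) (hyl : R.Incid y l) (hym : R.Incid y m) : x = y := by
  by_contra hxy
  exact hlm (R.line_eq_of_incid hxy hxl hyl hxm hym)

theorem exists_incid_ne_ne (l : Line) (u v : Point) : ∃ x, R.Incid x l ∧ x ≠ u ∧ x ≠ v := by
  obtain ⟨p, q, r, hpq, hpr, hqr, hp, hq, hr⟩ := R.A3 l
  by_contra! h
  have huv : ∀ x, R.Incid x l → x = u ∨ x = v := fun x hx => or_iff_not_imp_left.2 (h x hx)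
  rcases huv p hp with rfl | rfl <;> rcases huv q hq with rfl | rfl <;>
    rcases huv r hr with rfl | rfl <;> simp_all

theorem exists_two_incid_ne (l : Line) (u : Point) :
    ∃ x y, R.Incid x l ∧ R.Incid y l ∧ x ≠ y ∧ x ≠ u ∧ y ≠ u := by
  obtain ⟨x, hx, hxu, -⟩ := R.exists_incid_ne_ne l u u
  obtain ⟨y, hy, hyu, hyx⟩ := R.exists_incid_ne_ne l u x
  exact ⟨x, y, hx, hy, hyx.symm, hxu, hyu⟩

structure OrdinaryPair (a b : Line) (C : Point) : Prop where
  not_incid_left : ¬R.Incid R.D a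
  not_incid_right : ¬R.Incid R.D b
  ne : a ≠ b
  incid_left : R.Incid C a
  incid_right : R.Incid C b

def Crosses (a b : Line) (C : Point) (l : Line) : Prop :=
  ∃ X Y, R.Incid X a ∧ R.Incid X l ∧ X ≠ C ∧ R.Incid Y b ∧ R.Incid Y l ∧ Y ≠ C

def IsTransversal (a b : Line) (C : Point) (t : Line) : Prop :=
  ¬R.Incid R.D t ∧ R.Crosses a b C t

def IsSpoke (a b : Line) (C : Point) (k : Line) : Prop :=
  ¬R.Incid R.D k ∧ R.Incid C k ∧
    ∃ q, R.Incid q k ∧ ¬R.Incid q a ∧ ¬R.Incid q b ∧ ∃ t, R.IsTransversal a b C t ∧ R.Incid q t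

def planePoints (a b : Line) (C : Point) : Set Point :=
  {p | p = R.D ∨ R.Incid p a ∨ R.Incid p b ∨ ∃ t, R.IsTransversal a b C t ∧ R.Incid p t}

def planeLines (a b : Line) (C : Point) : Set Line :=
  {l | l = a ∨ l = b ∨ R.Incid R.D l ∨ R.IsTransversal a b C l ∨ R.IsSpoke a b C l}

def IsCoplanar (S : Set Line) : Prop :=
  ∃ (P' : Set Point) (L' : Set Line), R.IsSubplane P' L' ∧ R.IsFull P' L' ∧ S ⊆ L'

variable {R} {a b : Line} {C : Point}

theorem OrdinaryPair.symm (F : R.OrdinaryPair a b C) : R.OrdinaryPair b a C :=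
  ⟨F.not_incid_right, F.not_incid_left, F.ne.symm, F.incid_right, F.incid_left⟩

theorem OrdinaryPair.eq_of_incid (F : R.OrdinaryPair a b C) {x : Point} (hxa : R.Incid x a)
    (hxb : R.Incid x b) : x = C :=
  R.point_eq_of_incid F.ne hxa hxb F.incid_left F.incid_right

theorem OrdinaryPair.ne_of_incid (F : R.OrdinaryPair a b C) {x y : Point} (hxa : R.Incid x a)
    (hxC : x ≠ C) (hyb : R.Incid y b) : x ≠ y :=
  fun e => hxC (F.eq_of_incid hxa (e ▸ hyb))

theorem OrdinaryPair.not_collinear (F : R.OrdinaryPair a b C) {X₁ X₂ Y : Point} (hX : X₁ ≠ X₂)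
    (hX₁ : R.Incid X₁ a) (hX₂ : R.Incid X₂ a) (hY : R.Incid Y b) (hYC : Y ≠ C) (l : Line) :
    ¬(R.Incid X₁ l ∧ R.Incid X₂ l ∧ R.Incid Y l) := by
  rintro ⟨h₁, h₂, h₃⟩
  exact hYC (F.eq_of_incid (R.line_eq_of_incid hX h₁ h₂ hX₁ hX₂ ▸ h₃) hY)

theorem Crosses.symm {l : Line} (h : R.Crosses a b C l) : R.Crosses b a C l := by
  obtain ⟨X, Y, hXa, hXl, hXC, hYb, hYl, hYC⟩ := h
  exact ⟨Y, X, hYb, hYl, hYC, hXa, hXl, hXC⟩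

theorem IsTransversal.symm {t : Line} (ht : R.IsTransversal a b C t) :
    R.IsTransversal b a C t :=
  ⟨ht.1, ht.2.symm⟩

theorem mem_planePoints_symm {p : Point} (hp : p ∈ R.planePoints a b C) :
    p ∈ R.planePoints b a C := by
  rcases hp with hD | ha | hb | ⟨t, ht, hpt⟩
  · exact Or.inl hD
  · exact Or.inr (Or.inr (Or.inl ha))
  · exact Or.inr (Or.inl hb)
  · exact Or.inr (Or.inr (Or.inr ⟨t, ht.symm, hpt⟩))

theorem mem_planeLines_symm {l : Line} (hl : l ∈ R.planeLines a b C) :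
    l ∈ R.planeLines b a C := by
  rcases hl with rfl | rfl | hD | hT | ⟨hDl, hCl, q, hql, hqa, hqb, t, ht, hqt⟩
  · exact Or.inr (Or.inl rfl)
  · exact Or.inl rfl
  · exact Or.inr (Or.inr (Or.inl hD))
  · exact Or.inr (Or.inr (Or.inr (Or.inl hT.symm)))
  · exact Or.inr (Or.inr (Or.inr (Or.inr ⟨hDl, hCl, q, hql, hqb, hqa, t, ht.symm, hqt⟩)))

theorem mem_planeLines_of_crosses {l : Line} (h : R.Crosses a b C l) : l ∈ R.planeLines a b C := by
  by_cases hDl : R.Incid R.D l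
  · exact Or.inr (Or.inr (Or.inl hDl))
  · exact Or.inr (Or.inr (Or.inr (Or.inl ⟨hDl, h⟩)))

theorem exists_isTransversal_of_mem_planePoints {p : Point} (hp : p ∈ R.planePoints a b C)
    (hpD : p ≠ R.D) (hpa : ¬R.Incid p a) (hpb : ¬R.Incid p b) :
    ∃ t, R.IsTransversal a b C t ∧ R.Incid p t := by
  rcases hp with hD | ha | hb | ht
  · exact absurd hD hpD
  · exact absurd ha hpa
  · exact absurd hb hpb
  · exact ht

theorem IsTransversal.ne_left (F : R.OrdinaryPair a b C) {t : Line}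
    (ht : R.IsTransversal a b C t) : t ≠ a := by
  rintro rfl
  obtain ⟨-, -, Y, -, -, -, hYb, hYt, hYC⟩ := ht
  exact hYC (F.eq_of_incid hYt hYb)

theorem IsTransversal.not_incid_center (F : R.OrdinaryPair a b C) {t : Line}
    (ht : R.IsTransversal a b C t) : ¬R.Incid C t := by
  intro hCt
  have hta := ht.ne_left F
  obtain ⟨-, X, -, hXa, hXt, hXC, -⟩ := ht
  exact hta (R.line_eq_of_incid hXC hXt hCt hXa F.incid_left)

theorem IsTransversal.exists_incid (F : R.OrdinaryPair a b C) {t t' : Line}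
    (ht : R.IsTransversal a b C t) (ht' : R.IsTransversal a b C t') :
    ∃ x, R.Incid x t ∧ R.Incid x t' := by
  by_cases htt : t = t'
  · obtain ⟨x, -, -, -, -, -, hx, -, -⟩ := R.A3 t
    exact ⟨x, hx, htt ▸ hx⟩
  obtain ⟨hDt, X, Y, hXa, hXt, hXC, hYb, hYt, hYC⟩ := ht
  obtain ⟨hDt', X', Y', hX'a, hX't', hX'C, hY'b, hY't', hY'C⟩ := ht'
  by_cases hXX : X = X'
  · exact ⟨X, hXt, hXX ▸ hX't'⟩
  by_cases hYY : Y = Y'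
  · exact ⟨Y, hYt, hYY ▸ hY't'⟩
  exact R.A6 a b t t' C X X' Y Y' F.not_incid_left F.not_incid_right F.ne F.incid_left
    F.incid_right htt hXa hXt hX'a hX't' hYb hYt hY'b hY't' hXX (F.ne_of_incid hXa hXC hYb)
    (F.ne_of_incid hXa hXC hY'b) (F.ne_of_incid hX'a hX'C hYb) (F.ne_of_incid hX'a hX'C hY'b) hYY

theorem mem_planeLines_of_incid_left_of_isTransversal (F : R.OrdinaryPair a b C)
    {p q : Point} {t l : Line} (hpa : R.Incid p a) (hpC : p ≠ C)
    (ht : R.IsTransversal a b C t) (hqt : R.Incid q t) (hqa : ¬R.Incid q a)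
    (hqb : ¬R.Incid q b) (hpl : R.Incid p l) (hql : R.Incid q l) : l ∈ R.planeLines a b C := by
  have hta := ht.ne_left F
  obtain ⟨hDt, X, Y, hXa, hXt, -, hYb, hYt, hYC⟩ := ht
  have hCl : ¬R.Incid C l :=
    fun hCl => hqa (R.line_eq_of_incid hpC hpl hCl hpa F.incid_left ▸ hql)
  obtain ⟨W, hWl, hWb⟩ := R.A6 a t l b X p C q Y F.not_incid_left hDt hta.symm hXa hXt
    (fun e => hqb (e ▸ hql)) hpa hpl F.incid_left F.incid_right hqt hql hYt hYb hpC
    (fun e => hqa (e ▸ hpa)) (F.ne_of_incid hpa hpC hYb) (fun e => hqa (e ▸ F.incid_left))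
    hYC.symm (fun e => hqb (e ▸ hYb))
  exact mem_planeLines_of_crosses ⟨p, W, hpa, hpl, hpC, hWb, hWl, fun e => hCl (e ▸ hWl)⟩

theorem mem_planeLines_of_incid_right_of_isTransversal (F : R.OrdinaryPair a b C)
    {p q : Point} {t l : Line} (hpb : R.Incid p b) (hpC : p ≠ C)
    (ht : R.IsTransversal a b C t) (hqt : R.Incid q t) (hqa : ¬R.Incid q a)
    (hqb : ¬R.Incid q b) (hpl : R.Incid p l) (hql : R.Incid q l) : l ∈ R.planeLines a b C :=
  mem_planeLines_symm
    (mem_planeLines_of_incid_left_of_isTransversal F.symm hpb hpC ht.symm hqt hqb hqa hpl hql)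

theorem mem_planeLines_of_isTransversal_of_isTransversal (F : R.OrdinaryPair a b C)
    {p q : Point} {tp tq l : Line} (htp : R.IsTransversal a b C tp) (hptp : R.Incid p tp)
    (hpa : ¬R.Incid p a) (hpb : ¬R.Incid p b) (htq : R.IsTransversal a b C tq)
    (hqtq : R.Incid q tq) (hqa : ¬R.Incid q a) (hqb : ¬R.Incid q b) (hpq : p ≠ q)
    (hpl : R.Incid p l) (hql : R.Incid q l) : l ∈ R.planeLines a b C := by
  by_cases hqtp : R.Incid q tp
  · rw [R.line_eq_of_incid hpq hpl hql hptp hqtp]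
    exact Or.inr (Or.inr (Or.inr (Or.inl htp)))
  by_cases hDl : R.Incid R.D l
  · exact Or.inr (Or.inr (Or.inl hDl))
  by_cases hCl : R.Incid C l
  · exact Or.inr (Or.inr (Or.inr (Or.inr ⟨hDl, hCl, q, hql, hqa, hqb, tq, htq, hqtq⟩)))
  have htptq : tp ≠ tq := fun e => hqtp (e ▸ hqtq)
  obtain ⟨R₀, hR₀p, hR₀q⟩ := htp.exists_incid F htq
  have ⟨hDtp, Xp, Yp, hXpa, hXpt, _, hYpb, hYpt, _⟩ := htp
  obtain ⟨hDtq, Xq, Yq, hXqa, hXqt, hXqC, hYqb, hYqt, _⟩ := htq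
  -- (A6) on `tp`, `tq` makes `l` meet `a` or `b` away from `C`, depending on which feet differ
  by_cases hXX : Xp = Xq
  · have hYY : Yp ≠ Yq := fun e => hqtp (R.line_eq_of_incid (F.ne_of_incid hXqa hXqC hYqb)
      hXqt hYqt (hXX ▸ hXpt) (e ▸ hYpt) ▸ hqtq)
    obtain ⟨W, hWl, hWb⟩ := R.A6 tp tq l b R₀ p Yp q Yq hDtp hDtq htptq hR₀p hR₀q
      (fun e => hpb (e ▸ hpl)) hptp hpl hYpt hYpb hqtq hql hYqt hYqb (fun e => hpb (e ▸ hYpb))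
      hpq (fun e => hpb (e ▸ hYqb)) (fun e => hqb (e ▸ hYpb)) hYY (fun e => hqb (e ▸ hYqb))
    exact mem_planeLines_of_incid_right_of_isTransversal F hWb (fun e => hCl (e ▸ hWl)) htp
      hptp hpa hpb hWl hpl
  · obtain ⟨Z, hZl, hZa⟩ := R.A6 tp tq l a R₀ p Xp q Xq hDtp hDtq htptq hR₀p hR₀q
      (fun e => hpa (e ▸ hpl)) hptp hpl hXpt hXpa hqtq hql hXqt hXqa (fun e => hpa (e ▸ hXpa))
      hpq (fun e => hpa (e ▸ hXqa)) (fun e => hqa (e ▸ hXpa)) hXX (fun e => hqa (e ▸ hXqa))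
    exact mem_planeLines_of_incid_left_of_isTransversal F hZa (fun e => hCl (e ▸ hZl)) htp
      hptp hpa hpb hZl hpl

theorem isTransversal_of_incid_foot (F : R.OrdinaryPair a b C) {k t u : Line} {q S X : Point}
    (hDk : ¬R.Incid R.D k) (hCk : R.Incid C k) (ht : R.IsTransversal a b C t)
    (hqk : R.Incid q k) (hqt : R.Incid q t) (hXa : R.Incid X a) (hXt : R.Incid X t)
    (hXC : X ≠ C) (hSk : R.Incid S k) (hSa : ¬R.Incid S a) (hSb : ¬R.Incid S b)
    (hSu : R.Incid S u) (hXu : R.Incid X u) (hDu : ¬R.Incid R.D u) :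
    R.IsTransversal a b C u := by
  have hCt := ht.not_incid_center F
  obtain ⟨hDt, -, Y, -, -, -, hYb, hYt, hYC⟩ := ht
  have hSC : S ≠ C := fun e => hSa (e ▸ F.incid_left)
  obtain ⟨W, hWu, hWb⟩ := R.A6 k t u b q S C X Y hDk hDt (fun e => hCt (e ▸ hCk)) hqk hqt
    (fun e => hSb (e ▸ hSu)) hSk hSu hCk F.incid_right hXt hXu hYt hYb hSC
    (fun e => hSa (e ▸ hXa)) (fun e => hSb (e ▸ hYb)) hXC.symm hYC.symm
    (F.ne_of_incid hXa hXC hYb)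
  have hCu : ¬R.Incid C u := fun hCu =>
    hXC (R.point_eq_of_incid (fun e : k = a => hSa (e ▸ hSk))
      (R.line_eq_of_incid hSC hSu hCu hSk hCk ▸ hXu) hXa hCk F.incid_left)
  exact ⟨hDu, X, W, hXa, hXu, hXC, hWb, hWu, fun e => hCu (e ▸ hWu)⟩

theorem IsSpoke.mem_planePoints (F : R.OrdinaryPair a b C) {k : Line} {S : Point}
    (hk : R.IsSpoke a b C k) (hSk : R.Incid S k) : S ∈ R.planePoints a b C := by
  obtain ⟨hDk, hCk, q, hqk, -, -, t, ht, hqt⟩ := hk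
  by_cases hSa : R.Incid S a
  · exact Or.inr (Or.inl hSa)
  by_cases hSb : R.Incid S b
  · exact Or.inr (Or.inr (Or.inl hSb))
  by_cases hSt : R.Incid S t
  · exact Or.inr (Or.inr (Or.inr ⟨t, ht, hSt⟩))
  have ⟨_, X, Y, hXa, hXt, hXC, hYb, hYt, hYC⟩ := ht
  obtain ⟨u, ⟨hSu, hXu⟩, -⟩ := R.A1 S X (fun e => hSa (e ▸ hXa))
  obtain ⟨v, ⟨hSv, hYv⟩, -⟩ := R.A1 S Y (fun e => hSb (e ▸ hYb))
  by_cases hDu : R.Incid R.D u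
  · by_cases hDv : R.Incid R.D v
    · exfalso
      have huv : u = v := by
        by_contra huv
        exact hDk (R.point_eq_of_incid huv hSu hSv hDu hDv ▸ hSk)
      exact hSt (R.line_eq_of_incid (F.ne_of_incid hXa hXC hYb) hXu (huv ▸ hYv) hXt hYt ▸ hSu)
    · refine Or.inr (Or.inr (Or.inr ⟨v, ?_, hSv⟩))
      exact (isTransversal_of_incid_foot F.symm hDk hCk ht.symm hqk hqt hYb hYt hYC hSk hSb hSa
        hSv hYv hDv).symm
  · exact Or.inr (Or.inr (Or.inr ⟨u, isTransversal_of_incid_foot F hDk hCk ht hqk hqt hXa hXt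
      hXC hSk hSa hSb hSu hXu hDu, hSu⟩))

theorem IsTransversal.exists_incid_of_isSpoke_of_ne_foot (F : R.OrdinaryPair a b C)
    {k t t₀ : Line} {q R₀ X : Point} (ht : R.IsTransversal a b C t)
    (ht₀ : R.IsTransversal a b C t₀) (hCk : R.Incid C k) (hqk : R.Incid q k)
    (hqt₀ : R.Incid q t₀) (hqa : ¬R.Incid q a) (hqt : ¬R.Incid q t) (hRt₀ : R.Incid R₀ t₀)
    (hRt : R.Incid R₀ t) (hXa : R.Incid X a) (hXt : R.Incid X t) (hXC : X ≠ C) (hRX : R₀ ≠ X) :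
    ∃ x, R.Incid x t ∧ R.Incid x k := by
  have hCt := ht.not_incid_center F
  have hCt₀ := ht₀.not_incid_center F
  have ht₀a := ht₀.ne_left F
  obtain ⟨hDt₀, X₀, -, hX₀a, hX₀t₀, -⟩ := ht₀
  exact R.A6 t₀ a t k X₀ R₀ q X C hDt₀ F.not_incid_left ht₀a hX₀t₀ hX₀a
    (fun e => hCt (e ▸ hCk)) hRt₀ hRt hqt₀ hqk hXa hXt F.incid_left hCk
    (fun e => hqt (e ▸ hRt)) hRX (fun e => hCt (e ▸ hRt)) (fun e => hqa (e ▸ hXa))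
    (fun e => hCt₀ (e ▸ hqt₀)) hXC

theorem IsTransversal.exists_incid_of_isSpoke (F : R.OrdinaryPair a b C) {k t : Line}
    (ht : R.IsTransversal a b C t) (hk : R.IsSpoke a b C k) :
    ∃ x, R.Incid x t ∧ R.Incid x k := by
  obtain ⟨-, hCk, q, hqk, hqa, hqb, t₀, ht₀, hqt₀⟩ := hk
  by_cases hqt : R.Incid q t
  · exact ⟨q, hqt, hqk⟩
  obtain ⟨R₀, hRt₀, hRt⟩ := ht₀.exists_incid F ht
  have ⟨_, X, Y, hXa, hXt, hXC, hYb, hYt, hYC⟩ := ht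
  by_cases hRX : R₀ = X
  · exact ht.symm.exists_incid_of_isSpoke_of_ne_foot F.symm ht₀.symm hCk hqk hqt₀ hqb hqt hRt₀
      hRt hYb hYt hYC (hRX ▸ F.ne_of_incid hXa hXC hYb)
  · exact ht.exists_incid_of_isSpoke_of_ne_foot F ht₀ hCk hqk hqt₀ hqa hqt hRt₀ hRt hXa hXt hXC
      hRX

theorem incid_center_or_isTransversal (F : R.OrdinaryPair a b C) {l : Line}
    (hl : l ∈ R.planeLines a b C) (hDl : ¬R.Incid R.D l) :
    R.Incid C l ∨ R.IsTransversal a b C l := by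
  rcases hl with rfl | rfl | hD | hT | hK
  · exact Or.inl F.incid_left
  · exact Or.inl F.incid_right
  · exact absurd hD hDl
  · exact Or.inr hT
  · exact Or.inl hK.2.1

theorem IsTransversal.exists_incid_of_incid_center (F : R.OrdinaryPair a b C) {t m : Line}
    (ht : R.IsTransversal a b C t) (hm : m ∈ R.planeLines a b C) (hDm : ¬R.Incid R.D m)
    (hCm : R.Incid C m) : ∃ x, R.Incid x t ∧ R.Incid x m := by
  rcases hm with rfl | rfl | hD | hT | hK
  · obtain ⟨-, X, -, hXa, hXt, -⟩ := ht
    exact ⟨X, hXt, hXa⟩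
  · obtain ⟨-, -, Y, -, -, -, hYb, hYt, -⟩ := ht
    exact ⟨Y, hYt, hYb⟩
  · exact absurd hD hDm
  · exact absurd hCm (hT.not_incid_center F)
  · exact ht.exists_incid_of_isSpoke F hK

theorem exists_incid_of_mem_planeLines (F : R.OrdinaryPair a b C) {l m : Line}
    (hl : l ∈ R.planeLines a b C) (hm : m ∈ R.planeLines a b C) (hlm : l ≠ m) :
    ∃ x, R.Incid x l ∧ R.Incid x m := by
  by_cases hDl : R.Incid R.D l
  · obtain ⟨x, ⟨hxl, hxm⟩, -⟩ := R.A5 l m hDl hlm.symm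
    exact ⟨x, hxl, hxm⟩
  by_cases hDm : R.Incid R.D m
  · obtain ⟨x, ⟨hxm, hxl⟩, -⟩ := R.A5 m l hDm hlm
    exact ⟨x, hxl, hxm⟩
  rcases incid_center_or_isTransversal F hl hDl with hCl | hTl <;>
    rcases incid_center_or_isTransversal F hm hDm with hCm | hTm
  · exact ⟨C, hCl, hCm⟩
  · obtain ⟨x, hxm, hxl⟩ := hTm.exists_incid_of_incid_center F hl hDl hCl
    exact ⟨x, hxl, hxm⟩
  · exact hTl.exists_incid_of_incid_center F hm hDm hCm
  · exact hTl.exists_incid F hTm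

theorem mem_planePoints_of_mem_planeLines (F : R.OrdinaryPair a b C) {l : Line} {p : Point}
    (hl : l ∈ R.planeLines a b C) (hDl : ¬R.Incid R.D l) (hpl : R.Incid p l) :
    p ∈ R.planePoints a b C := by
  rcases hl with rfl | rfl | hD | hT | hK
  · exact Or.inr (Or.inl hpl)
  · exact Or.inr (Or.inr (Or.inl hpl))
  · exact absurd hD hDl
  · exact Or.inr (Or.inr (Or.inr ⟨l, hT, hpl⟩))
  · exact hK.mem_planePoints F hpl

theorem exists_mem_planePoints_incid (F : R.OrdinaryPair a b C) {l m : Line}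
    (hl : l ∈ R.planeLines a b C) (hm : m ∈ R.planeLines a b C) (hlm : l ≠ m) :
    ∃ x, x ∈ R.planePoints a b C ∧ R.Incid x l ∧ R.Incid x m := by
  obtain ⟨x, hxl, hxm⟩ := exists_incid_of_mem_planeLines F hl hm hlm
  by_cases hDl : R.Incid R.D l
  · by_cases hDm : R.Incid R.D m
    · exact ⟨R.D, Or.inl rfl, hDl, hDm⟩
    · exact ⟨x, mem_planePoints_of_mem_planeLines F hm hDm hxm, hxl, hxm⟩
  · exact ⟨x, mem_planePoints_of_mem_planeLines F hl hDl hxl, hxl, hxm⟩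

theorem mem_planeLines_of_incid_left (F : R.OrdinaryPair a b C) {p q : Point} {l : Line}
    (hpa : R.Incid p a) (hq : q ∈ R.planePoints a b C) (hqD : q ≠ R.D) (hpq : p ≠ q)
    (hpl : R.Incid p l) (hql : R.Incid q l) : l ∈ R.planeLines a b C := by
  by_cases hqa : R.Incid q a
  · exact Or.inl (R.line_eq_of_incid hpq hpl hql hpa hqa)
  by_cases hqb : R.Incid q b
  · by_cases hpC : p = C
    · exact Or.inr (Or.inl (R.line_eq_of_incid hpq hpl hql (hpC ▸ F.incid_right) hqb))
    · exact mem_planeLines_of_crosses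
        ⟨p, q, hpa, hpl, hpC, hqb, hql, fun e => hqa (e ▸ F.incid_left)⟩
  by_cases hDl : R.Incid R.D l
  · exact Or.inr (Or.inr (Or.inl hDl))
  obtain ⟨t, ht, hqt⟩ := exists_isTransversal_of_mem_planePoints hq hqD hqa hqb
  by_cases hpC : p = C
  · exact Or.inr (Or.inr (Or.inr (Or.inr ⟨hDl, hpC ▸ hpl, q, hql, hqa, hqb, t, ht, hqt⟩)))
  · exact mem_planeLines_of_incid_left_of_isTransversal F hpa hpC ht hqt hqa hqb hpl hql

theorem mem_planeLines_of_incid (F : R.OrdinaryPair a b C) {p q : Point} {l : Line}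
    (hp : p ∈ R.planePoints a b C) (hq : q ∈ R.planePoints a b C) (hpq : p ≠ q)
    (hpl : R.Incid p l) (hql : R.Incid q l) : l ∈ R.planeLines a b C := by
  by_cases hDl : R.Incid R.D l
  · exact Or.inr (Or.inr (Or.inl hDl))
  have hpD : p ≠ R.D := fun e => hDl (e ▸ hpl)
  have hqD : q ≠ R.D := fun e => hDl (e ▸ hql)
  by_cases hpa : R.Incid p a
  · exact mem_planeLines_of_incid_left F hpa hq hqD hpq hpl hql
  by_cases hpb : R.Incid p b
  · exact mem_planeLines_symm (mem_planeLines_of_incid_left F.symm hpb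
      (mem_planePoints_symm hq) hqD hpq hpl hql)
  by_cases hqa : R.Incid q a
  · exact mem_planeLines_of_incid_left F hqa hp hpD hpq.symm hql hpl
  by_cases hqb : R.Incid q b
  · exact mem_planeLines_symm (mem_planeLines_of_incid_left F.symm hqb
      (mem_planePoints_symm hp) hpD hpq.symm hql hpl)
  obtain ⟨tp, htp, hptp⟩ := exists_isTransversal_of_mem_planePoints hp hpD hpa hpb
  obtain ⟨tq, htq, hqtq⟩ := exists_isTransversal_of_mem_planePoints hq hqD hqa hqb
  exact mem_planeLines_of_isTransversal_of_isTransversal F htp hptp hpa hpb htq hqtq hqa hqb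
    hpq hpl hql

theorem OrdinaryPair.isSubplane (F : R.OrdinaryPair a b C) :
    R.IsSubplane (R.planePoints a b C) (R.planeLines a b C) := by
  refine ⟨fun p q hp hq hpq => ?_, fun l m hl hm hlm => exists_mem_planePoints_incid F hl hm hlm,
    ?_⟩
  · obtain ⟨l, ⟨hpl, hql⟩, hl⟩ := R.A1 p q hpq
    exact ⟨l, ⟨mem_planeLines_of_incid F hp hq hpq hpl hql, hpl, hql⟩, fun m hm => hl m hm.2⟩
  obtain ⟨X₁, X₂, hX₁, hX₂, hX, hX₁C, hX₂C⟩ := R.exists_two_incid_ne a C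
  obtain ⟨Y₁, Y₂, hY₁, hY₂, hY, hY₁C, hY₂C⟩ := R.exists_two_incid_ne b C
  refine ⟨X₁, X₂, Y₁, Y₂, Or.inr (Or.inl hX₁), Or.inr (Or.inl hX₂), Or.inr (Or.inr (Or.inl hY₁)),
    Or.inr (Or.inr (Or.inl hY₂)), hX, F.ne_of_incid hX₁ hX₁C hY₁, F.ne_of_incid hX₁ hX₁C hY₂,
    F.ne_of_incid hX₂ hX₂C hY₁, F.ne_of_incid hX₂ hX₂C hY₂, hY,
    fun l _ => F.not_collinear hX hX₁ hX₂ hY₁ hY₁C l,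
    fun l _ => F.not_collinear hX hX₁ hX₂ hY₂ hY₂C l,
    fun l _ h => F.symm.not_collinear hY hY₁ hY₂ hX₁ hX₁C l ⟨h.2.1, h.2.2, h.1⟩,
    fun l _ h => F.symm.not_collinear hY hY₁ hY₂ hX₂ hX₂C l ⟨h.2.1, h.2.2, h.1⟩⟩

theorem OrdinaryPair.isFull (F : R.OrdinaryPair a b C) :
    R.IsFull (R.planePoints a b C) (R.planeLines a b C) :=
  fun _ hl hDl _ hpl => mem_planePoints_of_mem_planeLines F hl hDl hpl

theorem IsCoplanar.mono {S T : Set Line} (h : R.IsCoplanar S) (hTS : T ⊆ S) : R.IsCoplanar T := by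
  obtain ⟨P', L', hsub, hfull, hS⟩ := h
  exact ⟨P', L', hsub, hfull, hTS.trans hS⟩

theorem OrdinaryPair.isCoplanar_of_crosses (F : R.OrdinaryPair a b C) {c : Line}
    (hc : R.Crosses a b C c) : R.IsCoplanar {a, b, c} := by
  refine ⟨_, _, F.isSubplane, F.isFull, ?_⟩
  simp only [Set.insert_subset_iff, Set.singleton_subset_iff]
  exact ⟨Or.inl rfl, Or.inr (Or.inl rfl), mem_planeLines_of_crosses hc⟩

theorem isCoplanar_of_two_special {s s' c : Line} (hDs : R.Incid R.D s)
    (hDs' : R.Incid R.D s') (hDc : ¬R.Incid R.D c) : R.IsCoplanar {s, s', c} := by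
  have hsc : s ≠ c := fun e => hDc (e ▸ hDs)
  obtain ⟨V₁, ⟨hV₁s, hV₁c⟩, -⟩ := R.A5 s c hDs hsc.symm
  obtain ⟨V₂, hV₂c, hV, -⟩ := R.exists_incid_ne_ne c V₁ V₁
  have hV₂s : ¬R.Incid V₂ s := fun h => hV (R.point_eq_of_incid hsc h hV₂c hV₁s hV₁c)
  obtain ⟨P, hPs, hPD, hPV₁⟩ := R.exists_incid_ne_ne s R.D V₁
  have hPV₂ : P ≠ V₂ := fun e => hV₂s (e ▸ hPs)
  obtain ⟨c', ⟨hPc', hV₂c'⟩, -⟩ := R.A1 P V₂ hPV₂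
  have hDc' : ¬R.Incid R.D c' := fun h => hV₂s (R.line_eq_of_incid hPD hPc' h hPs hDs ▸ hV₂c')
  have hcc' : c ≠ c' := fun e => hPV₁ (R.point_eq_of_incid hsc.symm (e ▸ hPc') hPs hV₁c hV₁s)
  have F : R.OrdinaryPair c c' V₂ := ⟨hDc, hDc', hcc', hV₂c, hV₂c'⟩
  refine ⟨_, _, F.isSubplane, F.isFull, ?_⟩
  simp only [Set.insert_subset_iff, Set.singleton_subset_iff]
  exact ⟨mem_planeLines_of_crosses ⟨V₁, P, hV₁c, hV₁s, hV.symm, hPc', hPs, hPV₂⟩,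
    Or.inr (Or.inr (Or.inl hDs')), Or.inl rfl⟩

end ProjRect

/-- Three lines intersecting pairwise in three distinct points form a coplanar triple. -/
theorem stmt_13 {Point Line : Type} (R : ProjRect Point Line) (l1 l2 l3 : Line)
    (h12 : l1 ≠ l2) (h13 : l1 ≠ l3) (h23 : l2 ≠ l3)
    (p12 p13 p23 : Point)
    (ha : R.Incid p12 l1) (hb : R.Incid p12 l2)
    (hc : R.Incid p13 l1) (hd : R.Incid p13 l3)
    (he : R.Incid p23 l2) (hf : R.Incid p23 l3)
    (hpa : p12 ≠ p13) (hpb : p12 ≠ p23) (hpc : p13 ≠ p23) :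
    ∃ (P' : Set Point) (L' : Set Line),
      R.IsSubplane P' L' ∧ R.IsFull P' L' ∧ l1 ∈ L' ∧ l2 ∈ L' ∧ l3 ∈ L' := by
  suffices h : R.IsCoplanar {l1, l2, l3} by
    obtain ⟨P', L', hsub, hfull, hL⟩ := h
    exact ⟨P', L', hsub, hfull, hL (by simp), hL (by simp), hL (by simp)⟩
  by_cases h1 : R.Incid R.D l1 <;> by_cases h2 : R.Incid R.D l2
  · have h3 : ¬R.Incid R.D l3 := fun h3 => hpa ((R.point_eq_of_incid h12 ha hb h1 h2).trans
      (R.point_eq_of_incid h13 hc hd h1 h3).symm)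
    exact R.isCoplanar_of_two_special h1 h2 h3
  · by_cases h3 : R.Incid R.D l3
    · exact (R.isCoplanar_of_two_special h1 h3 h2).mono (by simp [Set.insert_subset_iff])
    · exact (ProjRect.OrdinaryPair.isCoplanar_of_crosses ⟨h2, h3, h23, he, hf⟩
        ⟨p12, p13, hb, ha, hpb, hd, hc, hpc⟩).mono (by simp [Set.insert_subset_iff])
  · by_cases h3 : R.Incid R.D l3
    · exact (R.isCoplanar_of_two_special h2 h3 h1).mono (by simp [Set.insert_subset_iff])
    · exact (ProjRect.OrdinaryPair.isCoplanar_of_crosses ⟨h1, h3, h13, hc, hd⟩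
        ⟨p12, p23, ha, hb, hpa, hf, he, hpc.symm⟩).mono (by simp [Set.insert_subset_iff])
  · exact ProjRect.OrdinaryPair.isCoplanar_of_crosses ⟨h1, h2, h12, ha, hb⟩
      ⟨p13, p23, hc, hd, hpa.symm, he, hf, hpb.symm⟩
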